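/- arXiv:math/0302339 — 3 statements merged into one kernel-verified Lean document; each statement's English description precedes it below -/
import Mathlib

section
/- Let n ≥ 1 and E ∈ ℝⁿ \ {0}, and define φ : (ℝ \ {0}) × ℝⁿ → ℝ by φ(t,x) = |x|²/(2t) − (t/2) E·x − (t³/24)|E|². Then for every t ≠ 0 and x ∈ ℝⁿ, φ solves the eikonal equation ∂_t φ(t,x) + (1/2)|∇_x φ(t,x)|² + E·x = 0. -/
/-!
Direct computation: `∂ₜφ = -|x|²/(2t²) - E·x/2 - t²|E|²/8` and `∇ₓφ = x/t - (t/2)E`, and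
`(1/2)|x/t - (t/2)E|² = |x|²/(2t²) - E·x/2 + t²|E|²/8`, so everything cancels except `-E·x`.
-/

open scoped InnerProductSpace

variable {F : Type*} [NormedAddCommGroup F] [InnerProductSpace ℝ F]

lemma hasGradientAt_quadratic_phase [CompleteSpace F] (E x : F) (t c : ℝ) :
    HasGradientAt (fun y : F => ‖y‖ ^ 2 / (2 * t) - t / 2 * ⟪E, y⟫_ℝ - c)
      (t⁻¹ • x - (t / 2) • E) x := by
  rw [hasGradientAt_iff_hasFDerivAt]
  refine ((((hasStrictFDerivAt_norm_sq x).hasFDerivAt.mul_const (2 * t)⁻¹).sub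
    ((innerSL ℝ E).hasFDerivAt.const_mul (t / 2))).sub_const c).congr_fderiv ?_
  ext y
  simp only [sub_apply, smul_apply, coe_innerSL_apply, smul_eq_mul, map_sub, map_smul,
    InnerProductSpace.toDual_apply_apply]
  ring

lemma hasDerivAt_cubic_phase (a b c : ℝ) {t : ℝ} (ht : t ≠ 0) :
    HasDerivAt (fun s : ℝ => a / (2 * s) - s / 2 * b - s ^ 3 / 24 * c)
      (-a / (2 * t ^ 2) - b / 2 - t ^ 2 / 8 * c) t := by
  have hfun : (fun s : ℝ => a / (2 * s) - s / 2 * b - s ^ 3 / 24 * c) =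
      fun s => a / 2 * s⁻¹ - s * (b / 2) - s ^ 3 * (c / 24) := by
    funext s
    rw [mul_comm 2 s, ← div_div]
    ring
  rw [hfun]
  refine ((((hasDerivAt_inv ht).const_mul (a / 2)).fun_sub
    ((hasDerivAt_id' t).mul_const (b / 2))).fun_sub
    ((hasDerivAt_pow 3 t).mul_const (c / 24))).congr_deriv ?_
  field_simp
  ring

lemma norm_inv_smul_sub_half_smul_sq (E x : F) {t : ℝ} (ht : t ≠ 0) :
    ‖t⁻¹ • x - (t / 2) • E‖ ^ 2 = ‖x‖ ^ 2 / t ^ 2 - ⟪E, x⟫_ℝ + t ^ 2 / 4 * ‖E‖ ^ 2 := by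
  rw [norm_sub_sq_real, real_inner_smul_left, real_inner_smul_right, norm_smul, norm_smul,
    real_inner_comm x E]
  simp only [Real.norm_eq_abs, mul_pow, sq_abs]
  field_simp
  ring

theorem stmt_5_general {n : ℕ}
    (E : EuclideanSpace ℝ (Fin n))
    (φ : ℝ → EuclideanSpace ℝ (Fin n) → ℝ)
    (hφ : ∀ t x, φ t x = ‖x‖ ^ 2 / (2 * t) - t / 2 * ⟪E, x⟫_ℝ - t ^ 3 / 24 * ‖E‖ ^ 2) :
    ∀ t : ℝ, t ≠ 0 → ∀ x : EuclideanSpace ℝ (Fin n),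
      deriv (fun s => φ s x) t + (1 / 2) * ‖gradient (φ t) x‖ ^ 2 + ⟪E, x⟫_ℝ = 0 := by
  intro t ht x
  have h_time : deriv (fun s => φ s x) t =
      -‖x‖ ^ 2 / (2 * t ^ 2) - ⟪E, x⟫_ℝ / 2 - t ^ 2 / 8 * ‖E‖ ^ 2 := by
    simp only [hφ]
    exact (hasDerivAt_cubic_phase _ _ _ ht).deriv
  have h_space : gradient (φ t) x = t⁻¹ • x - (t / 2) • E := by
    rw [show φ t = _ from funext (hφ t)]
    exact (hasGradientAt_quadratic_phase E x t _).gradient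
  rw [h_time, h_space, norm_inv_smul_sub_half_smul_sq E x ht]
  field_simp
  ring

/-- the phase `φ(t,x) = |x|²/(2t) − (t/2) E·x − (t³/24)|E|²` solves the
eikonal equation `∂_t φ + (1/2)|∇_x φ|² + E·x = 0` for `t ≠ 0`. -/
theorem stmt_5 {n : ℕ} (hn : 1 ≤ n)
    (E : EuclideanSpace ℝ (Fin n)) (hE : E ≠ 0)
    (φ : ℝ → EuclideanSpace ℝ (Fin n) → ℝ)
    (hφ : ∀ t x, φ t x = ‖x‖ ^ 2 / (2 * t) - t / 2 * ⟪E, x⟫_ℝ - t ^ 3 / 24 * ‖E‖ ^ 2) :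
    ∀ t : ℝ, t ≠ 0 → ∀ x : EuclideanSpace ℝ (Fin n),
      deriv (fun s => φ s x) t + (1 / 2) * ‖gradient (φ t) x‖ ^ 2 + ⟪E, x⟫_ℝ = 0 :=
  stmt_5_general E φ hφ
end

section
/- Let n ≥ 1, ε ∈ (0,1], E ∈ ℝⁿ \ {0}, and let G : [0,∞) → ℝ be C¹. Define F : ℂ → ℂ by F(z) = z G(|z|²). Let w : ℝⁿ → ℂ be differentiable and t ≠ 0. Then at every point x ∈ ℝⁿ, with Jw := (x/ε) w + i t ∇w − (t²/(2ε)) E w (ℂⁿ-valued), one has the gauge-invariant chain rule J(F∘w)(x) = (G(|w(x)|²) + |w(x)|² G′(|w(x)|²)) · Jw(x) − w(x)² G′(|w(x)|²) · conj(Jw(x)), where conj denotes componentwise complex conjugation; that is, J_E^ε(t) F(w) = ∂_z F(w) J_E^ε(t) w − ∂_{z̄} F(w) conj(J_E^ε(t) w), with Wirtinger derivatives ∂_z F(z) = G(|z|²) + |z|² G′(|z|²) and ∂_{z̄} F(z) = z² G′(|z|²). -/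
/-!
Write `F z = z G(|z|²)`, `∂F = G(|z|²) + |z|² G'(|z|²)` and `∂̄F = z² G'(|z|²)`.
The operator `J` is a real multiplication operator plus `i t ∂ᵢ`. Gauge invariance
`F(e^{iθ} z) = e^{iθ} F z` gives `z ∂F − z̄ ∂̄F = F`, which handles the real multiplier; the
Wirtinger chain rule `∂ᵢ(F ∘ w) = ∂F ∂ᵢw + ∂̄F conj(∂ᵢw)` handles `i t ∂ᵢ`, whose `+` turns
into `−` because `conj(i t ∂ᵢw) = −i t conj(∂ᵢw)`.
-/

open Complex Set ComplexConjugate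
open scoped InnerProductSpace

theorem HasFDerivAt.mul_ofReal_comp_norm_sq {V : Type*} [NormedAddCommGroup V]
    [NormedSpace ℝ V] {w : V → ℂ} {D : V →L[ℝ] ℂ} {x : V} (hw : HasFDerivAt w D x)
    {G : ℝ → ℝ} {g' : ℝ} (hG : HasDerivWithinAt G g' (Ici 0) (‖w x‖ ^ 2)) :
    HasFDerivAt (fun y => w y * (G (‖w y‖ ^ 2) : ℂ))
      (((G (‖w x‖ ^ 2) : ℂ) + ((‖w x‖ ^ 2 : ℝ) : ℂ) * g') • D
        + (w x ^ 2 * g') • (conjCLE.toContinuousLinearMap.comp D)) x := by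
  have hGw : HasFDerivAt (fun y => G (‖w y‖ ^ 2)) (g' • (2 • (innerSL ℝ (w x)).comp D)) x := by
    rw [← hasFDerivWithinAt_univ]
    exact hG.comp_hasFDerivWithinAt x hw.norm_sq.hasFDerivWithinAt fun y _ => sq_nonneg _
  refine (hw.mul (ofRealCLM.hasFDerivAt.comp x hGw)).congr_fderiv ?_
  ext v
  have hinner : ((2 * ⟪w x, D v⟫_ℝ : ℝ) : ℂ) = conj (w x) * D v + w x * conj (D v) := by
    rw [Complex.inner, ← Complex.add_conj]
    simp only [map_mul, conj_conj]
    ring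
  have hnorm_sq : ((‖w x‖ ^ 2 : ℝ) : ℂ) = w x * conj (w x) := by
    rw [Complex.mul_conj, Complex.normSq_eq_norm_sq]
  simp only [add_apply, smul_apply, ContinuousLinearMap.comp_apply, innerSL_apply_apply,
    ofRealCLM_apply, Function.comp_apply, smul_eq_mul, nsmul_eq_mul, Nat.cast_ofNat, ofReal_mul,
    hinner, hnorm_sq, ContinuousLinearEquiv.coe_coe, conjCLE_apply]
  ring

theorem wirtinger_gauge_identity (z : ℂ) (g g' : ℝ) :
    ((g : ℂ) + ((‖z‖ ^ 2 : ℝ) : ℂ) * g') * z - z ^ 2 * g' * conj z = z * g := by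
  rw [ofReal_pow, ← Complex.mul_conj']
  ring

theorem stmt_9_general {n : ℕ} (ε : ℝ)
    (E : EuclideanSpace ℝ (Fin n))
    (G : ℝ → ℝ) (hG : ContDiffOn ℝ 1 G (Set.Ici 0))
    (w : EuclideanSpace ℝ (Fin n) → ℂ) (hw : Differentiable ℝ w)
    (t : ℝ) :
    ∀ (x : EuclideanSpace ℝ (Fin n)) (i : Fin n),
      -- the `i`-th component of `J_E^ε(t)(F ∘ w)` at `x` :
      ((x i : ℝ) / ε) * (w x * (G (‖w x‖ ^ 2) : ℝ))
        + Complex.I * t * fderiv ℝ (fun y => w y * (G (‖w y‖ ^ 2) : ℝ)) x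
            (EuclideanSpace.single i 1)
        - ((t ^ 2 / (2 * ε) : ℝ) : ℂ) * (E i : ℝ) * (w x * (G (‖w x‖ ^ 2) : ℝ))
      = (((G (‖w x‖ ^ 2) : ℝ) : ℂ) + ((‖w x‖ ^ 2 : ℝ) : ℂ) *
            ((derivWithin G (Set.Ici 0) (‖w x‖ ^ 2) : ℝ) : ℂ)) *
          (((x i : ℝ) / ε) * w x
            + Complex.I * t * fderiv ℝ w x (EuclideanSpace.single i 1)
            - ((t ^ 2 / (2 * ε) : ℝ) : ℂ) * (E i : ℝ) * w x)
        - w x ^ 2 * ((derivWithin G (Set.Ici 0) (‖w x‖ ^ 2) : ℝ) : ℂ) *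
          (starRingEnd ℂ) (((x i : ℝ) / ε) * w x
            + Complex.I * t * fderiv ℝ w x (EuclideanSpace.single i 1)
            - ((t ^ 2 / (2 * ε) : ℝ) : ℂ) * (E i : ℝ) * w x) := by
  intro x i
  have hG' := (hG.differentiableOn one_ne_zero _ (sq_nonneg ‖w x‖)).hasDerivWithinAt
  rw [((hw x).hasFDerivAt.mul_ofReal_comp_norm_sq hG').fderiv]
  simp only [add_apply, smul_apply, ContinuousLinearMap.comp_apply, smul_eq_mul,
    ContinuousLinearEquiv.coe_coe, conjCLE_apply, map_add, map_sub, map_mul, map_div₀,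
    conj_ofReal, conj_I]
  linear_combination -((x i : ℂ) / ε - ((t ^ 2 / (2 * ε) : ℝ) : ℂ) * (E i : ℝ)) *
    wirtinger_gauge_identity (w x) (G (‖w x‖ ^ 2)) (derivWithin G (Set.Ici 0) (‖w x‖ ^ 2))

/-- gauge-invariant chain rule for the operator `J_E^ε(t)`:
for `F(z) = z G(|z|²)` one has
`J(F∘w) = ∂_z F(w) · Jw − ∂_{z̄} F(w) · conj(Jw)`, with
`∂_z F(z) = G(|z|²) + |z|² G′(|z|²)` and `∂_{z̄} F(z) = z² G′(|z|²)`. -/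
theorem stmt_9 {n : ℕ} (hn : 1 ≤ n) (ε : ℝ) (hε : ε ∈ Set.Ioc (0 : ℝ) 1)
    (E : EuclideanSpace ℝ (Fin n)) (hE : E ≠ 0)
    (G : ℝ → ℝ) (hG : ContDiffOn ℝ 1 G (Set.Ici 0))
    (w : EuclideanSpace ℝ (Fin n) → ℂ) (hw : Differentiable ℝ w)
    (t : ℝ) (ht : t ≠ 0) :
    ∀ (x : EuclideanSpace ℝ (Fin n)) (i : Fin n),
      -- the `i`-th component of `J_E^ε(t)(F ∘ w)` at `x` :
      ((x i : ℝ) / ε) * (w x * (G (‖w x‖ ^ 2) : ℝ))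
        + Complex.I * t * fderiv ℝ (fun y => w y * (G (‖w y‖ ^ 2) : ℝ)) x
            (EuclideanSpace.single i 1)
        - ((t ^ 2 / (2 * ε) : ℝ) : ℂ) * (E i : ℝ) * (w x * (G (‖w x‖ ^ 2) : ℝ))
      = (((G (‖w x‖ ^ 2) : ℝ) : ℂ) + ((‖w x‖ ^ 2 : ℝ) : ℂ) *
            ((derivWithin G (Set.Ici 0) (‖w x‖ ^ 2) : ℝ) : ℂ)) *
          (((x i : ℝ) / ε) * w x
            + Complex.I * t * fderiv ℝ w x (EuclideanSpace.single i 1)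
            - ((t ^ 2 / (2 * ε) : ℝ) : ℂ) * (E i : ℝ) * w x)
        - w x ^ 2 * ((derivWithin G (Set.Ici 0) (‖w x‖ ^ 2) : ℝ) : ℂ) *
          (starRingEnd ℂ) (((x i : ℝ) / ε) * w x
            + Complex.I * t * fderiv ℝ w x (EuclideanSpace.single i 1)
            - ((t ^ 2 / (2 * ε) : ℝ) : ℂ) * (E i : ℝ) * w x) :=
  stmt_9_general ε E G hG w hw t
end

section
/- Let n ≥ 1, E ∈ ℝⁿ \ {0}, let v : ℝ × ℝⁿ → ℂ with v(t,·) differentiable and v(t,·), ∇_x v(t,·) ∈ L²(ℝⁿ) for each t, and define u(t,x) = v(t, x + (t²/2)E) · exp(−i(t E·x + (t³/6)|E|²)) (the case ε = 1). Then for every t ∈ ℝ, ‖(t E − i∇_x) u(t,·)‖_{L²(ℝⁿ)} = ‖∇_x v(t,·)‖_{L²(ℝⁿ)}, where (t E − i∇_x)u denotes the ℂⁿ-valued function x ↦ t E u(t,x) − i ∇_x u(t,x). -/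
open Complex MeasureTheory
open scoped InnerProductSpace

/-! Write `u(t,·) = g e^{-iφ}` with `g = v(t, · + a)`, `a = (t²/2)E` and the real phase
`φ(x) = t⟪E, x⟫ + t³‖E‖²/6`. The product rule gives the gauge identity
`(φ' − i∇)(g e^{-iφ}) = −i e^{-iφ} ∇g`, and `φ' = t⟪E, ·⟫`, so `(tE − i∇)u(t, x)` is the
unimodular multiple `−i e^{-iφ(x)}` of `∇v(t, x + a)`. The `L²` norm of the latter does not
see the translation by `a`. -/

theorem eLpNorm_comp_add_right {G ε : Type*} [AddGroup G] [MeasurableSpace G] [MeasurableAdd G]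
    [TopologicalSpace ε] [ContinuousENorm ε] (μ : Measure G) [μ.IsAddRightInvariant]
    {p : ENNReal} (f : G → ε) (a : G) :
    eLpNorm (fun x => f (x + a)) p μ = eLpNorm f p μ := by
  have hmap := (MeasurableEquiv.addRight a).measurableEmbedding.eLpNorm_map_measure
    (g := f) (μ := μ) (p := p)
  rw [MeasurableEquiv.coe_addRight, map_add_right_eq_self] at hmap
  exact hmap.symm

section Gauge
variable {F : Type*} [NormedAddCommGroup F] [NormedSpace ℝ F] {φ : F → ℝ} {φ' : F →L[ℝ] ℝ} {x : F}

theorem HasFDerivAt.cexp_neg_I_mul (hφ : HasFDerivAt φ φ' x) :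
    HasFDerivAt (fun y => cexp (-(I * φ y)))
      (cexp (-(I * φ x)) • (-I) • ofRealCLM.comp φ') x := by
  have hphase := (ofRealCLM.hasFDerivAt.comp x hφ).const_mul (-I)
  simp only [Function.comp_def, ofRealCLM_apply, neg_mul] at hphase
  exact hphase.cexp

theorem ofReal_mul_sub_I_mul_fderiv_mul_cexp {g : F → ℂ} (hg : DifferentiableAt ℝ g x)
    (hφ : HasFDerivAt φ φ' x) (y : F) :
    (φ' y : ℂ) * (g x * cexp (-(I * φ x)))
        - I * fderiv ℝ (fun z => g z * cexp (-(I * φ z))) x y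
      = -I * cexp (-(I * φ x)) * fderiv ℝ g x y := by
  have hprod : HasFDerivAt (fun z => g z * cexp (-(I * φ z))) _ x :=
    hg.hasFDerivAt.mul hφ.cexp_neg_I_mul
  rw [hprod.fderiv]
  simp only [add_apply, smul_apply, ContinuousLinearMap.comp_apply, ofRealCLM_apply, smul_eq_mul]
  linear_combination (φ' y * g x * cexp (-(I * φ x))) * I_sq

end Gauge

theorem stmt_12_general {n : ℕ}
    (E : EuclideanSpace ℝ (Fin n))
    (v : ℝ → EuclideanSpace ℝ (Fin n) → ℂ)
    (hv_diff : ∀ t, Differentiable ℝ (v t))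
    (u : ℝ → EuclideanSpace ℝ (Fin n) → ℂ)
    (hu : ∀ t x, u t x = v t (x + (t ^ 2 / 2) • E) *
      Complex.exp (-(Complex.I * ((t * ⟪E, x⟫_ℝ + t ^ 3 / 6 * ‖E‖ ^ 2 : ℝ) : ℂ)))) :
    ∀ t : ℝ,
      eLpNorm (fun x => (WithLp.toLp 2 (fun i =>
          (t : ℂ) * (E i : ℝ) * u t x
            - Complex.I * fderiv ℝ (u t) x (EuclideanSpace.single i 1)) :
        EuclideanSpace ℂ (Fin n))) 2 volume
      = eLpNorm (fun x => (WithLp.toLp 2 (fun i => fderiv ℝ (v t) x (EuclideanSpace.single i 1)) :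
          EuclideanSpace ℂ (Fin n))) 2 volume := by
  intro t
  set a := (t ^ 2 / 2) • E
  set φ : EuclideanSpace ℝ (Fin n) → ℝ := fun x => t * ⟪E, x⟫_ℝ + t ^ 3 / 6 * ‖E‖ ^ 2
  have hφ (x) : HasFDerivAt φ (t • innerSL ℝ E) x :=
    ((innerSL ℝ E).hasFDerivAt.const_smul t).add_const _
  refine (eLpNorm_congr_norm_ae (.of_forall fun x => ?_)).trans
    (eLpNorm_comp_add_right volume _ a)
  have hcomp (i : Fin n) : (t : ℂ) * (E i : ℝ) * u t x
      - I * fderiv ℝ (u t) x (EuclideanSpace.single i 1)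
      = -I * cexp (-(I * φ x)) * fderiv ℝ (v t) (x + a) (EuclideanSpace.single i 1) := by
    have hvx : DifferentiableAt ℝ (fun y => v t (y + a)) x :=
      (differentiableAt_comp_add_right a).2 (hv_diff t _)
    have hgauge := ofReal_mul_sub_I_mul_fderiv_mul_cexp hvx (hφ x) (EuclideanSpace.single i 1)
    rw [fderiv_comp_add_right] at hgauge
    rw [← hgauge, funext (hu t)]
    simp [EuclideanSpace.inner_single_right, φ, a]
  have hvec : (WithLp.toLp 2 (fun i => (t : ℂ) * (E i : ℝ) * u t x
        - I * fderiv ℝ (u t) x (EuclideanSpace.single i 1)) : EuclideanSpace ℂ (Fin n))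
      = (-I * cexp (-(I * φ x))) •
        WithLp.toLp 2 (fun i => fderiv ℝ (v t) (x + a) (EuclideanSpace.single i 1)) := by
    ext i
    exact hcomp i
  rw [hvec, norm_smul]
  simp [norm_exp]

/-- under the Avron–Herbst transform (`ε = 1`), the `L²` norm of
`(tE − i∇_x)u(t,·)` equals the `L²` norm of `∇_x v(t,·)`. -/
theorem stmt_12 {n : ℕ} (hn : 1 ≤ n)
    (E : EuclideanSpace ℝ (Fin n)) (hE : E ≠ 0)
    (v : ℝ → EuclideanSpace ℝ (Fin n) → ℂ)
    (hv_diff : ∀ t, Differentiable ℝ (v t))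
    (hv_L2 : ∀ t, MemLp (v t) 2 volume)
    (hgrad_L2 : ∀ t, MemLp (fun x => (WithLp.toLp 2 (fun i => fderiv ℝ (v t) x (EuclideanSpace.single i 1)) :
      EuclideanSpace ℂ (Fin n))) 2 volume)
    (u : ℝ → EuclideanSpace ℝ (Fin n) → ℂ)
    (hu : ∀ t x, u t x = v t (x + (t ^ 2 / 2) • E) *
      Complex.exp (-(Complex.I * ((t * ⟪E, x⟫_ℝ + t ^ 3 / 6 * ‖E‖ ^ 2 : ℝ) : ℂ)))) :
    ∀ t : ℝ,
      eLpNorm (fun x => (WithLp.toLp 2 (fun i =>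
          (t : ℂ) * (E i : ℝ) * u t x
            - Complex.I * fderiv ℝ (u t) x (EuclideanSpace.single i 1)) :
        EuclideanSpace ℂ (Fin n))) 2 volume
      = eLpNorm (fun x => (WithLp.toLp 2 (fun i => fderiv ℝ (v t) x (EuclideanSpace.single i 1)) :
          EuclideanSpace ℂ (Fin n))) 2 volume :=
  stmt_12_general E v hv_diff u hu
end
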